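/- Let m > 1, and let H : ℝ^N × ℝ^N × ℝ^N → ℝ be continuous and satisfy: (i) sup_{x,y} |H(x,y,0)| < ∞; (ii) the superlinearity condition: for all μ ∈ (0,1), μ·H(x,y,μ⁻¹p) − H(x,y,p) ≥ (1−μ)(b_0|p|^m − C_0) for some b_0, C_0 > 0; (iii) the continuity condition |H(x,y,p) − H(x',y',p')| ≤ ω(|x−x'|+|y−y'|)(1+R^m) + ω(|p−p'|)(1+R^{m−1}) for all |p|,|p'| ≤ R, where ω is a modulus of continuity with ω(r) ≤ C₁r for r ≥ 1. Then there exist constants C > 1 and K ≥ 0 such that H(x,y,p) ≥ C⁻¹(1 + |p|^m) − K for all x, y, p ∈ ℝ^N. -/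
import Mathlib


theorem stmt3 (N : ℕ) (m b0 C0 C1 M : ℝ) (hm : 1 < m) (hb0 : 0 < b0) (hC0 : 0 < C0)
    (H : EuclideanSpace ℝ (Fin N) → EuclideanSpace ℝ (Fin N) → EuclideanSpace ℝ (Fin N) → ℝ)
    (hcont : Continuous fun t : EuclideanSpace ℝ (Fin N) × EuclideanSpace ℝ (Fin N) ×
      EuclideanSpace ℝ (Fin N) => H t.1 t.2.1 t.2.2)
    (hbound : ∀ x y, |H x y 0| ≤ M)
    (hsl : ∀ μ ∈ Set.Ioo (0:ℝ) 1, ∀ x y p,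
      μ * H x y (μ⁻¹ • p) - H x y p ≥ (1 - μ) * (b0 * ‖p‖ ^ m - C0))
    (ω : ℝ → ℝ) (hω0 : ∀ r, 0 ≤ r → 0 ≤ ω r) (hωmono : Monotone ω)
    (hωlim : Filter.Tendsto ω (nhdsWithin 0 (Set.Ioi 0)) (nhds 0))
    (hωlin : ∀ r : ℝ, 1 ≤ r → ω r ≤ C1 * r)
    (hH2 : ∀ R : ℝ, ∀ x x' y y' p p' : EuclideanSpace ℝ (Fin N), ‖p‖ ≤ R → ‖p'‖ ≤ R →
      |H x y p - H x' y' p'| ≤ ω (‖x - x'‖ + ‖y - y'‖) * (1 + R ^ m)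
        + ω ‖p - p'‖ * (1 + R ^ (m - 1))) :
    ∃ C K : ℝ, 1 < C ∧ 0 ≤ K ∧ ∀ x y p, H x y p ≥ C⁻¹ * (1 + ‖p‖ ^ m) - K := by
  classical
  have hC1 : 0 ≤ C1 := le_trans (hω0 1 one_pos.le) (by simpa using hωlin 1 le_rfl)
  have hM : 0 ≤ M := le_trans (abs_nonneg _) (hbound 0 0)
  set B : ℝ := M + 4*C1 + C0 + b0 with hBdef
  have hBpos : 0 < B := by positivity
  -- bound near the origin
  have hsmall : ∀ x y r, ‖r‖ ≤ 1 → H x y r ≥ -(M + 4*C1) := by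
    intro x y r hr
    have h2 := hH2 1 x x y y r 0 hr (by simp)
    simp only [sub_self, norm_zero, add_zero, zero_add, sub_zero, Real.one_rpow] at h2
    have hωr : ω ‖r‖ ≤ C1 := le_trans (hωmono hr) (by simpa using hωlin 1 le_rfl)
    have hω0' : ω 0 ≤ C1 := le_trans (hωmono zero_le_one) (by simpa using hωlin 1 le_rfl)
    have habs := abs_le.mp (hbound x y)
    have h3 := neg_abs_le (H x y r - H x y 0)
    linarith
  -- doubling step
  have hstep : ∀ x y q, H x y q ≥ 2 * H x y ((2:ℝ)⁻¹ • q) + b0 * (‖q‖/2)^m - C0 := by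
    intro x y q
    have h := hsl (1/2) ⟨one_half_pos, one_half_lt_one⟩ x y ((2:ℝ)⁻¹ • q)
    rw [show ((1:ℝ)/2)⁻¹ • ((2:ℝ)⁻¹ • q) = q from by
      rw [smul_smul]; norm_num] at h
    have hn : ‖(2:ℝ)⁻¹ • q‖ = ‖q‖/2 := by
      rw [norm_smul, Real.norm_eq_abs, abs_of_pos (by norm_num : (0:ℝ) < 2⁻¹)]
      ring
    rw [hn] at h
    linarith
  -- iterated bound
  have hind : ∀ n : ℕ, ∀ x y q, ‖q‖ ≤ 2^n →
      H x y q ≥ b0 * (‖q‖/2)^m - B * (2^(n+1) - 1) := by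
    intro n
    induction n with
    | zero =>
      intro x y q hq
      have hq' : ‖q‖ ≤ 1 := by simpa using hq
      have h1 := hsmall x y q hq'
      have hpow : (‖q‖/2)^m ≤ 1 :=
        Real.rpow_le_one (by positivity) (by linarith) (by linarith)
      have := mul_le_mul_of_nonneg_left hpow hb0.le
      norm_num
      linarith
    | succ n ih =>
      intro x y q hq
      have hn : ‖(2:ℝ)⁻¹ • q‖ = ‖q‖/2 := by
        rw [norm_smul, Real.norm_eq_abs, abs_of_pos (by norm_num : (0:ℝ) < 2⁻¹)]
        ring
      have hhalf : ‖(2:ℝ)⁻¹ • q‖ ≤ 2^n := by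
        rw [hn]
        rw [pow_succ] at hq
        linarith
      have h1 := hstep x y q
      have h2 := ih x y ((2:ℝ)⁻¹ • q) hhalf
      have h0 : (0:ℝ) ≤ b0 * (‖(2:ℝ)⁻¹ • q‖/2)^m := by positivity
      have hpB : B * (2:ℝ)^(n+1+1) = 2 * (B * 2^(n+1)) := by ring
      have hBC0 : C0 ≤ B := by rw [hBdef]; linarith
      nlinarith [h1, h2, h0, hpB, hBC0]
  -- choice of n
  have hfind : ∀ t : ℝ, 0 ≤ t → ∃ n : ℕ, t ≤ 2^n ∧ (2:ℝ)^n ≤ 2*t + 1 := by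
    intro t ht
    have hex : ∃ n : ℕ, t ≤ 2^n := by
      obtain ⟨n, hn⟩ := pow_unbounded_of_one_lt t (by norm_num : (1:ℝ) < 2)
      exact ⟨n, hn.le⟩
    refine ⟨Nat.find hex, Nat.find_spec hex, ?_⟩
    rcases Nat.eq_zero_or_pos (Nat.find hex) with h0 | hpos
    · rw [h0]; norm_num; linarith
    · obtain ⟨k, hk⟩ := Nat.exists_eq_succ_of_ne_zero hpos.ne'
      have hmin : ¬ t ≤ 2^k := Nat.find_min hex (by omega)
      push_neg at hmin
      rw [hk, pow_succ]
      linarith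
  -- global rough bound
  set a : ℝ := b0 / (2:ℝ)^m with hadef
  have h2m : (0:ℝ) < (2:ℝ)^m := Real.rpow_pos_of_pos two_pos m
  have ha : 0 < a := div_pos hb0 h2m
  have hrough : ∀ x y q, H x y q ≥ a * ‖q‖^m - 4*B*‖q‖ - B := by
    intro x y q
    obtain ⟨n, hn1, hn2⟩ := hfind ‖q‖ (norm_nonneg q)
    have h := hind n x y q hn1
    have hdiv : (‖q‖/2)^m = ‖q‖^m / (2:ℝ)^m :=
      Real.div_rpow (norm_nonneg q) (by norm_num) m
    rw [hdiv] at h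
    have hp : (2:ℝ)^(n+1) = 2 * 2^n := by ring
    have hbb : B * (2^(n+1) - 1) ≤ B * (4*‖q‖ + 1) := by
      apply mul_le_mul_of_nonneg_left _ hBpos.le
      rw [hp]; linarith
    have : b0 * (‖q‖^m / (2:ℝ)^m) = a * ‖q‖^m := by
      rw [hadef]; ring
    linarith [h, hbb, this ▸ h]
  -- set up constants
  set c : ℝ := min (a/2) (1/2) with hcdef
  have hc : 0 < c := lt_min (by positivity) (by norm_num)
  have hca : c ≤ a/2 := min_le_left _ _
  have hch : c ≤ 1/2 := min_le_right _ _
  set t0 : ℝ := max 1 ((8*B/a) ^ (m-1)⁻¹) with ht0def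
  have ht0 : 1 ≤ t0 := le_max_left _ _
  have hm1 : (0:ℝ) < m - 1 := by linarith
  have ht0key : 4*B ≤ a/2 * t0 ^ (m-1) := by
    have h1 : ((8*B/a) ^ (m-1)⁻¹) ^ (m-1) = 8*B/a :=
      Real.rpow_inv_rpow (by positivity) hm1.ne'
    have h2 : ((8*B/a) ^ (m-1)⁻¹) ^ (m-1) ≤ t0 ^ (m-1) :=
      Real.rpow_le_rpow (Real.rpow_nonneg (by positivity) _) (le_max_right _ _) hm1.le
    rw [h1] at h2
    have : a/2 * (8*B/a) ≤ a/2 * t0 ^ (m-1) :=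
      mul_le_mul_of_nonneg_left h2 (by positivity)
    calc 4*B = a/2 * (8*B/a) := by field_simp; ring
    _ ≤ a/2 * t0 ^ (m-1) := this
  refine ⟨c⁻¹, c + B + 4*B*t0, ?_, by positivity, ?_⟩
  · rw [lt_inv_comm₀ one_pos hc]
    · linarith
  · intro x y p
    have h := hrough x y p
    rw [inv_inv]
    set t : ℝ := ‖p‖ with htdef
    have ht : 0 ≤ t := norm_nonneg p
    -- suffices: (a - c) * t^m - 4*B*t + 4*B*t0 ≥ 0
    have key : (a - c) * t^m - 4*B*t + 4*B*t0 ≥ 0 := by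
      rcases le_or_gt t t0 with hle | hlt
      · have h1 : 0 ≤ (a - c) * t^m := by
          apply mul_nonneg (by linarith) (Real.rpow_nonneg ht m)
        nlinarith
      · have htpos : (0:ℝ) < t := lt_of_lt_of_le one_pos (le_trans ht0 hlt.le)
        have hsplit : t^m = t * t^(m-1) := by
          have h' := Real.rpow_add htpos 1 (m-1)
          rw [Real.rpow_one] at h'
          rw [show (1:ℝ) + (m-1) = m by ring] at h'
          exact h'
        have hmono : t0^(m-1) ≤ t^(m-1) :=
          Real.rpow_le_rpow (by linarith) hlt.le hm1.le
        have h4 : 4*B ≤ a/2 * t^(m-1) :=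
          le_trans ht0key (mul_le_mul_of_nonneg_left hmono (by positivity))
        have h5 : (4*B) * t ≤ (a/2 * t^(m-1)) * t := mul_le_mul_of_nonneg_right h4 ht
        have h6 : (a/2) * t^m ≤ (a-c) * t^m :=
          mul_le_mul_of_nonneg_right (by linarith) (Real.rpow_nonneg ht m)
        have h7 : (a/2) * t^m = (a/2 * t^(m-1)) * t := by rw [hsplit]; ring
        have h8 : (0:ℝ) ≤ B * t0 := mul_nonneg hBpos.le (le_trans zero_le_one ht0)
        nlinarith [h5, h6, h7, h8]
    linarith
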